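/- For the normalized Lennard-Jones type setting, if φ''_{2F} ≤ 0 then the quadratic form of the linearized atomistic operator satisfies ⟨L^a u, u⟩ = A_F ‖u'‖²_{ℓ²_ε} − ε² φ''_{2F} ‖u''‖²_{ℓ²_ε} for all admissible displacements u, where A_F = φ''_F + 4 φ''_{2F}. -/

import Mathlib

/-!
Summation by parts gives, for a finitely supported `u` and any shift `k`,
`∑ (2 u_j - u_{j+k} - u_{j-k}) u_j = ∑ (u_j - u_{j-k})²`; with `k = 1` and `k = 2` this handles the
nearest and next-nearest neighbour terms of `L^a`. Writing `u_j - u_{j-2} = a_j + a_{j-1}` with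
`a_j = u_j - u_{j-1}`, the parallelogram law `(a + b)² = 2a² + 2b² - (a - b)²` and one more shift
turn `∑ (u_j - u_{j-2})²` into `4 ∑ a_j² - ∑ (a_{j+1} - a_j)²`, which produces the `u''` term.
-/

open Function

@[fun_prop]
theorem Function.HasFiniteSupport.fun_pow {α M : Type*} [MonoidWithZero M] {f : α → M}
    (hf : f.HasFiniteSupport) (n : ℕ) [NeZero n] : HasFiniteSupport fun x => f x ^ n :=
  hf.fun_comp (zero_pow (NeZero.ne n))

theorem finsum_eq_sum_Icc {M : Type*} [AddCommMonoid M] {f : ℤ → M} {a b : ℤ}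
    (hf : ∀ j, j < a ∨ b < j → f j = 0) : ∑ᶠ j, f j = ∑ j ∈ Finset.Icc a b, f j :=
  finsum_eq_finsetSum_of_support_subset f fun j hj => by
    rw [Finset.coe_Icc, Set.mem_Icc]
    by_contra hj'
    exact hj (hf j (by omega))

section FiniteDifferences

variable {G R : Type*} [AddCommGroup G] [CommRing R] {u : G → R}

theorem finsum_sub_comp_add_eq_zero {M : Type*} [AddCommGroup M] {f : G → M}
    (hf : f.HasFiniteSupport) (k : G) : ∑ᶠ j, (f j - f (j + k)) = 0 := by
  rw [finsum_sub_distrib hf (hf.fun_comp_of_injective (add_left_injective k)), sub_eq_zero]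
  exact (finsum_comp_equiv (Equiv.addRight k)).symm

theorem finsum_two_mul_sub_shifts_mul_self (hu : u.HasFiniteSupport) (k : G) :
    ∑ᶠ j, (2 * u j - u (j + k) - u (j - k)) * u j = ∑ᶠ j, (u j - u (j - k)) ^ 2 := by
  set h : G → R := fun j => u (j - k) * (u j - u (j - k))
  have hh : h.HasFiniteSupport := by fun_prop (disch := simp [Injective])
  calc ∑ᶠ j, (2 * u j - u (j + k) - u (j - k)) * u j
      = ∑ᶠ j, ((u j - u (j - k)) ^ 2 + (h j - h (j + k))) :=
        finsum_congr fun j => by simp only [h, add_sub_cancel_right]; ring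
    _ = ∑ᶠ j, (u j - u (j - k)) ^ 2 := by
        rw [finsum_add_distrib (by fun_prop (disch := simp [Injective]))
            (by fun_prop (disch := simp [Injective])),
          finsum_sub_comp_add_eq_zero hh, add_zero]

theorem finsum_sub_two_shift_sq (hu : u.HasFiniteSupport) (k : G) :
    ∑ᶠ j, (u j - u (j - 2 • k)) ^ 2
      = 4 * ∑ᶠ j, (u j - u (j - k)) ^ 2 - ∑ᶠ j, (u (j + k) - 2 * u j + u (j - k)) ^ 2 := by
  set g : G → R := fun j =>
    2 * (u (j - k) - u (j - 2 • k)) ^ 2 - (u j - 2 * u (j - k) + u (j - 2 • k)) ^ 2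
  have hg : g.HasFiniteSupport := by fun_prop (disch := simp [Injective])
  calc ∑ᶠ j, (u j - u (j - 2 • k)) ^ 2
      = ∑ᶠ j, ((4 * (u j - u (j - k)) ^ 2 - (u (j + k) - 2 * u j + u (j - k)) ^ 2)
          + (g j - g (j + k))) :=
        finsum_congr fun j => by
          simp only [g, add_sub_cancel_right, two_nsmul, add_sub_add_right_eq_sub]; ring
    _ = 4 * ∑ᶠ j, (u j - u (j - k)) ^ 2 - ∑ᶠ j, (u (j + k) - 2 * u j + u (j - k)) ^ 2 := by
        rw [finsum_add_distrib (by fun_prop (disch := simp [Injective]))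
            (by fun_prop (disch := simp [Injective])),
          finsum_sub_comp_add_eq_zero hg, add_zero,
          finsum_sub_distrib (by fun_prop (disch := simp [Injective]))
            (by fun_prop (disch := simp [Injective])),
          mul_finsum' _ _ (by fun_prop (disch := simp [Injective]))]

end FiniteDifferences

theorem atomistic_quadratic_form_identity
    (N : ℕ) (ε φF φ2F : ℝ)
    (u : ℤ → ℝ) (hu : ∀ j : ℤ, (N : ℤ) ≤ |j| → u j = 0) :
    ε * ∑ j ∈ Finset.Icc (-(N : ℤ) + 1) ((N : ℤ) - 1),
        (φF * ((-u (j + 1) + 2 * u j - u (j - 1)) / ε ^ 2)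
          + φ2F * ((-u (j + 2) + 2 * u j - u (j - 2)) / ε ^ 2)) * u j
      = (φF + 4 * φ2F) *
          (ε * ∑ ℓ ∈ Finset.Icc (-(N : ℤ) + 1) (N : ℤ), ((u ℓ - u (ℓ - 1)) / ε) ^ 2)
        - φ2F * ε ^ 3 * ∑ ℓ ∈ Finset.Icc (-(N : ℤ)) (N : ℤ),
            ((u (ℓ + 1) - 2 * u ℓ + u (ℓ - 1)) / ε ^ 2) ^ 2 := by
  have hu₀ : ∀ j : ℤ, j ≤ -N ∨ N ≤ j → u j = 0 := fun j hj => hu j (le_abs'.mpr hj)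
  have hfin : u.HasFiniteSupport := (Set.finite_Ioo (-(N : ℤ)) N).subset fun j hj => by
    rw [Set.mem_Ioo]; by_contra hj'; exact hj (hu₀ j (by omega))
  have hL : ∑ j ∈ Finset.Icc (-(N : ℤ) + 1) ((N : ℤ) - 1),
        (φF * ((-u (j + 1) + 2 * u j - u (j - 1)) / ε ^ 2)
          + φ2F * ((-u (j + 2) + 2 * u j - u (j - 2)) / ε ^ 2)) * u j
      = φF / ε ^ 2 * ∑ᶠ j, (2 * u j - u (j + 1) - u (j - 1)) * u j
        + φ2F / ε ^ 2 * ∑ᶠ j, (2 * u j - u (j + 2) - u (j - 2)) * u j := by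
    rw [finsum_eq_sum_Icc (a := -N + 1) (b := N - 1)
        fun j hj => by rw [hu₀ j (by omega), mul_zero],
      finsum_eq_sum_Icc (a := -N + 1) (b := N - 1)
        fun j hj => by rw [hu₀ j (by omega), mul_zero],
      Finset.mul_sum, Finset.mul_sum, ← Finset.sum_add_distrib]
    exact Finset.sum_congr rfl fun j _ => by ring
  have hD1 : ∑ ℓ ∈ Finset.Icc (-(N : ℤ) + 1) (N : ℤ), ((u ℓ - u (ℓ - 1)) / ε) ^ 2
      = (∑ᶠ ℓ, (u ℓ - u (ℓ - 1)) ^ 2) / ε ^ 2 := by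
    rw [finsum_eq_sum_Icc (a := -N + 1) (b := N)
        fun j hj => by rw [hu₀ j (by omega), hu₀ (j - 1) (by omega)]; simp,
      Finset.sum_div]
    simp only [div_pow]
  have hD2 : ∑ ℓ ∈ Finset.Icc (-(N : ℤ)) (N : ℤ), ((u (ℓ + 1) - 2 * u ℓ + u (ℓ - 1)) / ε ^ 2) ^ 2
      = (∑ᶠ ℓ, (u (ℓ + 1) - 2 * u ℓ + u (ℓ - 1)) ^ 2) / ε ^ 4 := by
    rw [finsum_eq_sum_Icc (a := -N) (b := N)
        fun j hj => by rw [hu₀ (j + 1) (by omega), hu₀ j (by omega), hu₀ (j - 1) (by omega)]; simp,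
      Finset.sum_div]
    simp only [div_pow, ← pow_mul]
  have hstep2 := finsum_sub_two_shift_sq hfin (1 : ℤ)
  rw [show (2 : ℕ) • (1 : ℤ) = 2 from rfl] at hstep2
  rw [hL, hD1, hD2, finsum_two_mul_sub_shifts_mul_self hfin,
    finsum_two_mul_sub_shifts_mul_self hfin, hstep2]
  -- With `x / 0 = 0` both sides vanish at `ε = 0`.
  rcases eq_or_ne ε 0 with rfl | hε
  · simp
  · field_simp
    ring
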